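/- Let D ≥ 1, let q ∈ Q_∞ with left-continuous version q⃗, let T > 0, and let (L, α) be any decomposition of q on [0,T]. Then for every t ∈ supp dα, L(t) equals the right limit at t of the composed function t' ↦ q⃗(α(t')); that is, L(t) = lim_{t' ↓ t} q⃗(α(t')) for t < T, and L(T) = q⃗(α(T)) = q⃗(1) when t = T. In particular, q⃗ and α determine L on supp dα. -/

import Mathlib

open Set Filter Topology Matrix MeasureTheory

/-!
Every point `t` of `supp dα` is a point of strict increase of the extension `F` of `α`:
`F a < F b` whenever `a < t < b`. Hence for `t < t' ≤ T` the quantile `α⁻¹ (α t')` lies in `[t, t']`, so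
`q⃗ (α t') = L (α⁻¹ (α t'))` is within `K (t' - t)` of `L t` by the Lipschitz bound on `L`;
and for `t = T` the same argument gives `α⁻¹ 1 = T`.
-/

namespace StieltjesFunction

variable {R : Type*} [LinearOrder R] [TopologicalSpace R] [OrderTopology R] [CompactIccSpace R]
  [MeasurableSpace R] [BorelSpace R] [SecondCountableTopology R] [DenselyOrdered R]
  {f : StieltjesFunction R} {t : R}

theorem lt_of_mem_support (ht : t ∈ f.measure.support) {a b : R} (hat : a < t) (htb : t < b) :
    f a < f b := by
  have hpos := (Measure.mem_support_iff_forall t).1 ht _ (Ioo_mem_nhds hat htb)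
  rw [measure_Ioo, ENNReal.ofReal_pos, sub_pos] at hpos
  exact hpos.trans_le (f.mono.leftLim_le le_rfl)

theorem le_of_mem_support_of_apply_le (ht : t ∈ f.measure.support) {t' u : R} (htt' : t < t')
    (hu : f t' ≤ f u) : t ≤ u :=
  le_of_not_gt fun hut => (lt_of_mem_support ht hut htt').not_ge hu

theorem le_of_mem_support_of_forall_lt_eq [NoMinOrder R] (ht : t ∈ f.measure.support) {a : R}
    {c : ℝ} (hf : ∀ u < a, f u = c) : a ≤ t := by
  refine le_of_not_gt fun hta => ?_
  obtain ⟨a', ha'⟩ := exists_lt t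
  obtain ⟨b, htb, hba⟩ := exists_between hta
  exact (lt_of_mem_support ht ha' htb).ne ((hf a' (ha'.trans hta)).trans (hf b hba).symm)

end StieltjesFunction

theorem Matrix.abs_apply_le_sqrt_trace_mul_transpose {m n : Type*} [Fintype m] [Fintype n]
    (M : Matrix m n ℝ) (i : m) (j : n) : |M i j| ≤ √((M * Mᵀ).trace) := by
  have htrace : (M * Mᵀ).trace = ∑ a, ∑ b, M a b ^ 2 := by
    simp [Matrix.trace, Matrix.mul_apply, sq]
  rw [htrace, ← Real.sqrt_sq_eq_abs]
  gcongr
  calc M i j ^ 2 ≤ ∑ b, M i b ^ 2 :=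
        Finset.single_le_sum (fun b _ => sq_nonneg (M i b)) (Finset.mem_univ j)
    _ ≤ ∑ a, ∑ b, M a b ^ 2 :=
        Finset.single_le_sum (f := fun a => ∑ b, M a b ^ 2)
          (fun a _ => Finset.sum_nonneg fun b _ => sq_nonneg _) (Finset.mem_univ i)

theorem Matrix.tendsto_of_sqrt_trace_sub_le {ι m n : Type*} [Fintype m] [Fintype n]
    {l : Filter ι} {f : ι → Matrix m n ℝ} {A : Matrix m n ℝ} {g : ι → ℝ}
    (hg : Tendsto g l (𝓝 0)) (hfg : ∀ᶠ x in l, √(((f x - A) * (f x - A)ᵀ).trace) ≤ g x) :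
    Tendsto f l (𝓝 A) := by
  refine tendsto_pi_nhds.2 fun i => tendsto_pi_nhds.2 fun j => ?_
  rw [tendsto_iff_dist_tendsto_zero]
  refine squeeze_zero' (Eventually.of_forall fun _ => dist_nonneg) ?_ hg
  filter_upwards [hfg] with x hx
  exact (abs_apply_le_sqrt_trace_mul_transpose (f x - A) i j).trans hx

theorem csInf_mem_Icc_of_mem_of_mem_lowerBounds {α : Type*} [ConditionallyCompleteLattice α]
    {S : Set α} {a b : α} (hb : b ∈ S) (ha : a ∈ lowerBounds S) : sInf S ∈ Icc a b :=
  ⟨le_csInf ⟨b, hb⟩ ha, csInf_le ⟨a, ha⟩ hb⟩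

noncomputable def quantile (T : ℝ) (α : ℝ → ℝ) (s : ℝ) : ℝ :=
  sInf {t : ℝ | t ∈ Icc 0 T ∧ s ≤ α t}

def IsPDFExtension (T : ℝ) (α F : ℝ → ℝ) : Prop :=
  ∀ t, F t = if t < 0 then 0 else if t ≤ T then α t else 1

namespace IsPDFExtension

variable {T : ℝ} {α : ℝ → ℝ}

theorem eq_zero {F : ℝ → ℝ} (hF : IsPDFExtension T α F) {u : ℝ} (hu : u < 0) : F u = 0 := by
  rw [hF, if_pos hu]

theorem eqOn {F : ℝ → ℝ} (hF : IsPDFExtension T α F) : EqOn F α (Icc 0 T) := fun u hu => by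
  rw [hF, if_neg (not_lt.2 hu.1), if_pos hu.2]

theorem eq_one {F : ℝ → ℝ} (hF : IsPDFExtension T α F) (hT : 0 ≤ T) {u : ℝ} (hu : T < u) :
    F u = 1 := by
  rw [hF, if_neg (by linarith), if_neg (not_le.2 hu)]

variable {F : StieltjesFunction ℝ} {t : ℝ}

theorem nonneg_of_mem_support (hF : IsPDFExtension T α F) (ht : t ∈ F.measure.support) :
    0 ≤ t :=
  F.le_of_mem_support_of_forall_lt_eq ht fun _ => hF.eq_zero

theorem quantile_mem_Icc_of_mem_support (hF : IsPDFExtension T α F)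
    (ht : t ∈ F.measure.support) {t' s u : ℝ} (htt' : t < t') (hs : F t' ≤ s)
    (hu : u ∈ Icc 0 T) (hsu : s ≤ α u) : quantile T α s ∈ Icc t u :=
  csInf_mem_Icc_of_mem_of_mem_lowerBounds ⟨hu, hsu⟩ fun _ hv =>
    F.le_of_mem_support_of_apply_le ht htt' (hs.trans (hv.2.trans_eq (hF.eqOn hv.1).symm))

theorem apply_mem_Ioc_of_mem_support (hF : IsPDFExtension T α F)
    (ht : t ∈ F.measure.support) {t' : ℝ} (htt' : t < t') (ht'T : t' ≤ T) :
    α t' ∈ Ioc 0 1 := by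
  have ht0 := hF.nonneg_of_mem_support ht
  rw [← hF.eqOn ⟨ht0.trans htt'.le, ht'T⟩]
  refine ⟨?_, ?_⟩
  · simpa [hF.eq_zero] using F.lt_of_mem_support ht (a := -1) (by linarith) htt'
  · simpa [hF.eq_one (ht0.trans (htt'.le.trans ht'T)) (lt_add_one T)] using
      F.mono (by linarith : t' ≤ T + 1)

theorem quantile_one_of_mem_support (hF : IsPDFExtension T α F) (hαT : α T = 1)
    (hT : T ∈ F.measure.support) : quantile T α 1 = T := by
  have hT0 := hF.nonneg_of_mem_support hT
  have hQ := hF.quantile_mem_Icc_of_mem_support hT (lt_add_one T)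
    (hF.eq_one hT0 (lt_add_one T)).le ⟨hT0, le_rfl⟩ hαT.ge
  rwa [Icc_self, mem_singleton_iff] at hQ

end IsPDFExtension

theorem decomposition_determined_on_support_general
    (D : ℕ) (T : ℝ)
    (qv : ℝ → Matrix (Fin D) (Fin D) ℝ)
    (α : ℝ → ℝ)
    (hαT : α T = 1)
    (L : ℝ → Matrix (Fin D) (Fin D) ℝ)
    (hL_lip : ∃ K : ℝ, ∀ t ∈ Icc (0:ℝ) T, ∀ t' ∈ Icc (0:ℝ) T,
      Real.sqrt (((L t - L t') * (L t - L t')ᵀ).trace) ≤ K * |t - t'|)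
    (hdecomp : ∀ s ∈ Ioc (0:ℝ) 1, qv s = L (sInf {t : ℝ | t ∈ Icc 0 T ∧ s ≤ α t}))
    (F : StieltjesFunction ℝ)
    (hF : ∀ t : ℝ, F t = if t < 0 then 0 else if t ≤ T then α t else 1) :
    ∀ t ∈ ⋂₀ {K : Set ℝ | IsClosed K ∧ F.measure Kᶜ = 0},
      (t < T → Tendsto (fun t' => qv (α t')) (𝓝[>] t) (𝓝 (L t))) ∧
      (t = T → L T = qv (α T)) := by
  obtain ⟨K, hK⟩ := hL_lip
  have hF : IsPDFExtension T α F := hF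
  intro t ht
  rw [← Measure.support_eq_sInter] at ht
  have ht0 : 0 ≤ t := hF.nonneg_of_mem_support ht
  refine ⟨fun htT => ?_, ?_⟩
  · have hg : Tendsto (fun t' => |K| * (t' - t)) (𝓝[>] t) (𝓝 0) := by
      simpa using (((continuous_sub_right t).const_mul |K|).tendsto t).mono_left
        nhdsWithin_le_nhds
    refine Matrix.tendsto_of_sqrt_trace_sub_le hg ?_
    filter_upwards [Ioc_mem_nhdsGT htT] with t' ⟨htt', ht'T⟩
    have ht' : t' ∈ Icc 0 T := ⟨ht0.trans htt'.le, ht'T⟩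
    have hQ := hF.quantile_mem_Icc_of_mem_support ht htt' (hF.eqOn ht').le ht' le_rfl
    rw [hdecomp _ (hF.apply_mem_Ioc_of_mem_support ht htt' ht'T)]
    calc _ ≤ K * |quantile T α (α t') - t| :=
          hK _ ⟨ht0.trans hQ.1, hQ.2.trans ht'T⟩ t ⟨ht0, htT.le⟩
      _ ≤ |K| * (t' - t) := mul_le_mul (le_abs_self K)
          (abs_le.2 ⟨by linarith [hQ.1], by linarith [hQ.2]⟩) (abs_nonneg _) (abs_nonneg K)
  · rintro rfl
    rw [hαT, hdecomp 1 ⟨one_pos, le_rfl⟩]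
    exact congrArg L (hF.quantile_one_of_mem_support hαT ht).symm

/-- Let `D ≥ 1`, let `q ∈ Q_∞` with left-continuous version
`qv`, let `T > 0`, and let `(L, α)` be any decomposition of `q` on `[0,T]` (`L`
Lipschitz and increasing for the PSD order, `α` a p.d.f. on `[0,T]`, and
`qv s = L (α⁻¹ s)` for `s ∈ (0,1]`).  Then for every `t` in the support of `dα`
(the smallest closed set of full measure for the Lebesgue–Stieltjes measure of
the extension `F` of `α`), `L t` is the right limit at `t` of `t' ↦ qv (α t')`:
`L t = lim_{t' ↓ t} qv (α t')` for `t < T`, and `L T = qv (α T)` when `t = T`.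
In particular `qv` and `α` determine `L` on `supp dα`. -/
theorem decomposition_determined_on_support
    (D : ℕ) (hD : 1 ≤ D) (T : ℝ) (hT : 0 < T)
    (q qv : ℝ → Matrix (Fin D) (Fin D) ℝ)
    (hpsd : ∀ s ∈ Ico (0:ℝ) 1, (q s).PosSemidef)
    (hmono : ∀ ⦃u v : ℝ⦄, u ∈ Ico (0:ℝ) 1 → v ∈ Ico (0:ℝ) 1 → u ≤ v →
      (q v - q u).PosSemidef)
    (hq_rc : ∀ s ∈ Ico (0:ℝ) 1, Tendsto q (𝓝[>] s) (𝓝 (q s)))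
    (hbdd : ∃ C : ℝ, ∀ s ∈ Ico (0:ℝ) 1, Real.sqrt ((q s * (q s)ᵀ).trace) ≤ C)
    (hqv0 : qv 0 = 0)
    (hqv : ∀ s ∈ Ioc (0:ℝ) 1, Tendsto q (𝓝[<] s) (𝓝 (qv s)))
    (α : ℝ → ℝ)
    (hα_range : ∀ t ∈ Icc (0:ℝ) T, α t ∈ Icc (0:ℝ) 1)
    (hα_mono : ∀ ⦃t t' : ℝ⦄, t ∈ Icc 0 T → t' ∈ Icc 0 T → t ≤ t' → α t ≤ α t')
    (hα_rc : ∀ t ∈ Ico (0:ℝ) T, Tendsto α (𝓝[>] t) (𝓝 (α t)))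
    (hαT : α T = 1)
    (L : ℝ → Matrix (Fin D) (Fin D) ℝ)
    (hL_psd : ∀ t ∈ Icc (0:ℝ) T, (L t).PosSemidef)
    (hL_mono : ∀ ⦃t t' : ℝ⦄, t ∈ Icc 0 T → t' ∈ Icc 0 T → t ≤ t' →
      (L t' - L t).PosSemidef)
    (hL_lip : ∃ K : ℝ, ∀ t ∈ Icc (0:ℝ) T, ∀ t' ∈ Icc (0:ℝ) T,
      Real.sqrt (((L t - L t') * (L t - L t')ᵀ).trace) ≤ K * |t - t'|)
    (hdecomp : ∀ s ∈ Ioc (0:ℝ) 1, qv s = L (sInf {t : ℝ | t ∈ Icc 0 T ∧ s ≤ α t}))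
    (F : StieltjesFunction ℝ)
    (hF : ∀ t : ℝ, F t = if t < 0 then 0 else if t ≤ T then α t else 1) :
    ∀ t ∈ ⋂₀ {K : Set ℝ | IsClosed K ∧ F.measure Kᶜ = 0},
      (t < T → Tendsto (fun t' => qv (α t')) (𝓝[>] t) (𝓝 (L t))) ∧
      (t = T → L T = qv (α T)) :=
  decomposition_determined_on_support_general D T qv α hαT L hL_lip hdecomp F hF
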